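/- Let Ω = G × (-h,h) and let v be a smooth horizontally periodic solution of the primitive equations with horizontal viscosity ∂_t v + v·∇_H v + w ∂_z v - Δ_H v + ∇_H p = 0, ∂_z p = 0, div_H v + ∂_z w = 0, w(z=±h)=0, on [0,T]. If ∂_z v(·, ·, ·, h)|_{t=0} = 0, then ∂_z v(t, ·, ·, h) = 0 for all t ∈ [0,T]; the analogous statement holds at z = -h. -/

import Mathlib

open MeasureTheory Set

noncomputable section

/-- Points of the 3D domain. -/
abbrev Pt : Type := ℝ × ℝ × ℝ

/-- Ω = G × (-h,h) with G = (-1,1)². -/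
def Omega (h : ℝ) : Set Pt :=
  (Ioo (-1 : ℝ) 1) ×ˢ ((Ioo (-1 : ℝ) 1) ×ˢ (Ioo (-h) h))

/-- Lebesgue measure restricted to Ω. -/
def muOmega (h : ℝ) : Measure Pt := volume.restrict (Omega h)

/-- Horizontal partial derivative ∂ₓ. -/
def dX (f : Pt → ℝ) (p : Pt) : ℝ := fderiv ℝ f p (1, 0, 0)
/-- Horizontal partial derivative ∂_y. -/
def dY (f : Pt → ℝ) (p : Pt) : ℝ := fderiv ℝ f p (0, 1, 0)
/-- Vertical partial derivative ∂_z. -/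
def dZ (f : Pt → ℝ) (p : Pt) : ℝ := fderiv ℝ f p (0, 0, 1)

/-- L²(Ω) norm. -/
def L2 (h : ℝ) (f : Pt → ℝ) : ℝ := (eLpNorm f 2 (muOmega h)).toReal
/-- L^∞(Ω) norm. -/
def Linf (h : ℝ) (f : Pt → ℝ) : ℝ := (eLpNorm f ⊤ (muOmega h)).toReal
/-- L²(Ω) inner product. -/
def ip (h : ℝ) (f g : Pt → ℝ) : ℝ := ∫ p, f p * g p ∂(muOmega h)

/-- Iterated partial derivative ∂ₓ^a ∂_y^b ∂_z^c. -/
def Dop (a b c : ℕ) (f : Pt → ℝ) : Pt → ℝ := dX^[a] (dY^[b] (dZ^[c] f))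

/-- H^s(Ω) norm: sum of L² norms of derivatives of order ≤ s. -/
def HsNorm (h : ℝ) (s : ℕ) (f : Pt → ℝ) : ℝ :=
  ∑ a ∈ Finset.range (s+1), ∑ b ∈ Finset.range (s+1), ∑ c ∈ Finset.range (s+1),
    if a + b + c ≤ s then L2 h (Dop a b c f) else 0

/-- Membership in H^s(Ω): all derivatives of order ≤ s lie in L²(Ω). -/
def MemHs (h : ℝ) (s : ℕ) (f : Pt → ℝ) : Prop :=
  ∀ a b c : ℕ, a + b + c ≤ s → MemLp (Dop a b c f) 2 (muOmega h)

/-- Horizontal periodicity (period 2 in x and y). -/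
def HPeriodic (f : Pt → ℝ) : Prop :=
  ∀ x y z : ℝ, f (x + 2, y, z) = f (x, y, z) ∧ f (x, y + 2, z) = f (x, y, z)

/-- Horizontal periodicity for vector-valued functions. -/
def HPerF {E : Type*} (f : Pt → E) : Prop :=
  ∀ x y z : ℝ, f (x + 2, y, z) = f (x, y, z) ∧ f (x, y + 2, z) = f (x, y, z)

/-- Horizontal divergence of a horizontal vector field. -/
def divH (v : Pt → ℝ × ℝ) (p : Pt) : ℝ :=
  dX (fun q => (v q).1) p + dY (fun q => (v q).2) p

/-- Vertical derivative of a vector field. -/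
def dZv (b : Pt → ℝ × ℝ) (p : Pt) : ℝ × ℝ := fderiv ℝ b p (0, 0, 1)

/-- Inner product of the space H = H¹((-h,h),L²(G)). -/
def ipH (h : ℝ) (f g : Pt → ℝ) : ℝ := ip h f g + ip h (dZ f) (dZ g)

/-- Squared norm of H = H¹((-h,h),L²(G)). -/
def HnormSq (h : ℝ) (u : Pt → ℝ) : ℝ := (L2 h u)^2 + (L2 h (dZ u))^2

/-- ∫_{-h}^{z} v(x,y,ξ) dξ. -/
def Fint (h : ℝ) (v : Pt → ℝ × ℝ) (p : Pt) : ℝ × ℝ :=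
  ∫ ξ in (-h)..p.2.2, v (p.1, p.2.1, ξ)

/-- ∫_{-h}^{h} v(x,y,ξ) dξ, viewed as a function on Ω (independent of z). -/
def FintFull (h : ℝ) (v : Pt → ℝ × ℝ) (p : Pt) : ℝ × ℝ :=
  ∫ ξ in (-h)..h, v (p.1, p.2.1, ξ)

/-- Points of the 2D domain. -/
abbrev Pt2 : Type := ℝ × ℝ

/-- G = (-1,1)². -/
def Gset : Set Pt2 := (Ioo (-1 : ℝ) 1) ×ˢ (Ioo (-1 : ℝ) 1)

/-- Lebesgue measure restricted to G. -/
def muG : Measure Pt2 := volume.restrict Gset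

/-- ∂ₓ in 2D. -/
def dX2 (f : Pt2 → ℝ) (p : Pt2) : ℝ := fderiv ℝ f p (1, 0)
/-- ∂_y in 2D. -/
def dY2 (f : Pt2 → ℝ) (p : Pt2) : ℝ := fderiv ℝ f p (0, 1)
/-- L²(G) norm. -/
def L2G (f : Pt2 → ℝ) : ℝ := (eLpNorm f 2 muG).toReal

/-- ∂ₓ in 2D for vector valued functions. -/
def dX2v (f : Pt2 → ℝ × ℝ) (p : Pt2) : ℝ × ℝ := fderiv ℝ f p (1, 0)
/-- ∂_y in 2D for vector valued functions. -/
def dY2v (f : Pt2 → ℝ × ℝ) (p : Pt2) : ℝ × ℝ := fderiv ℝ f p (0, 1)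

section Infra

/-- directional derivative operator on joint functions -/
noncomputable def Dd (e : ℝ × Pt) (f : ℝ × Pt → ℝ) (q : ℝ × Pt) : ℝ := fderiv ℝ f q e

def eT : ℝ × Pt := (1, (0,0,0))
def eX : ℝ × Pt := (0, (1,0,0))
def eY : ℝ × Pt := (0, (0,1,0))
def eZ : ℝ × Pt := (0, (0,0,1))

variable {f g : ℝ × Pt → ℝ}

lemma Dd_contDiff (hf : ContDiff ℝ (⊤:ℕ∞) f) (e : ℝ × Pt) : ContDiff ℝ (⊤:ℕ∞) (Dd e f) :=
  (hf.fderiv_right (le_refl _)).clm_apply contDiff_const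

lemma hasDerivAt_sliceT (hf : Differentiable ℝ f) (t : ℝ) (p : Pt) :
    HasDerivAt (fun s => f (s, p)) (Dd eT f (t, p)) t := by
  have h1 : HasDerivAt (fun s : ℝ => (s, p)) ((1:ℝ), (0:Pt)) t :=
    (hasDerivAt_id t).prodMk (hasDerivAt_const t p)
  have := (hf (t, p)).hasFDerivAt.comp_hasDerivAt t h1
  exact this

lemma hasDerivAt_sliceX (hf : Differentiable ℝ f) (t x y z : ℝ) :
    HasDerivAt (fun s => f (t, (s, y, z))) (Dd eX f (t, (x, y, z))) x := by
  have h1 : HasDerivAt (fun s : ℝ => ((t : ℝ), ((s, y, z) : Pt))) (((0:ℝ), ((1:ℝ),(0:ℝ),(0:ℝ)))) x :=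
    (hasDerivAt_const x t).prodMk (((hasDerivAt_id x).prodMk (hasDerivAt_const x ((y,z) : ℝ × ℝ))))
  exact (hf (t, (x,y,z))).hasFDerivAt.comp_hasDerivAt x h1

lemma hasDerivAt_sliceY (hf : Differentiable ℝ f) (t x y z : ℝ) :
    HasDerivAt (fun s => f (t, (x, s, z))) (Dd eY f (t, (x, y, z))) y := by
  have h1 : HasDerivAt (fun s : ℝ => ((t : ℝ), ((x, s, z) : Pt))) (((0:ℝ), ((0:ℝ),(1:ℝ),(0:ℝ)))) y :=
    (hasDerivAt_const y t).prodMk (((hasDerivAt_const y x).prodMk ((hasDerivAt_id y).prodMk (hasDerivAt_const y z))))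
  exact (hf (t, (x,y,z))).hasFDerivAt.comp_hasDerivAt y h1

lemma hasDerivAt_sliceZ (hf : Differentiable ℝ f) (t x y z : ℝ) :
    HasDerivAt (fun s => f (t, (x, y, s))) (Dd eZ f (t, (x, y, z))) z := by
  have h1 : HasDerivAt (fun s : ℝ => ((t : ℝ), ((x, y, s) : Pt))) (((0:ℝ), ((0:ℝ),(0:ℝ),(1:ℝ)))) z :=
    (hasDerivAt_const z t).prodMk (((hasDerivAt_const z x).prodMk ((hasDerivAt_const z y).prodMk (hasDerivAt_id z))))
  exact (hf (t, (x,y,z))).hasFDerivAt.comp_hasDerivAt z h1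

lemma fderiv_slice (hf : Differentiable ℝ f) (t : ℝ) (p : Pt) (e : Pt) :
    fderiv ℝ (fun q => f (t, q)) p e = Dd (0, e) f (t, p) := by
  have h1 : HasFDerivAt (fun q : Pt => ((t : ℝ), q)) (ContinuousLinearMap.inr ℝ ℝ Pt) p :=
    (hasFDerivAt_const t p).prodMk (hasFDerivAt_id p)
  have h2 := ((hf (t, p)).hasFDerivAt.comp p h1)
  rw [show (fun q => f (t, q)) = f ∘ (fun q : Pt => ((t:ℝ), q)) from rfl, h2.fderiv]
  rfl

lemma Dd_comm (hf : ContDiff ℝ (⊤:ℕ∞) f) (e e' : ℝ × Pt) (q : ℝ × Pt) :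
    Dd e (Dd e' f) q = Dd e' (Dd e f) q := by
  have hle : (1 : WithTop ℕ∞) ≤ ((⊤:ℕ∞) : WithTop ℕ∞) := by
    exact_mod_cast (le_top : (1:ℕ∞) ≤ ⊤)
  have hf' : ContDiff ℝ (⊤:ℕ∞) (fderiv ℝ f) := hf.fderiv_right (le_refl _)
  have hd : DifferentiableAt ℝ (fderiv ℝ f) q :=
    (hf'.differentiable (by simp)).differentiableAt
  have hsymm : ∀ a b : ℝ × Pt,
      (fderiv ℝ (fderiv ℝ f) q a) b = (fderiv ℝ (fderiv ℝ f) q b) a :=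
    second_derivative_symmetric (fun y => ((hf.differentiable (by simp)) y).hasFDerivAt)
      (hd.hasFDerivAt)
  have key : ∀ a b : ℝ × Pt, Dd a (Dd b f) q = (fderiv ℝ (fderiv ℝ f) q a) b := by
    intro a b
    unfold Dd
    rw [fderiv_clm_apply hd (differentiableAt_const b)]
    simp
  rw [key, key, hsymm]

lemma Dd_mul (hf : Differentiable ℝ f) (hg : Differentiable ℝ g) (e : ℝ × Pt) (q : ℝ × Pt) :
    Dd e (fun r => f r * g r) q = Dd e f q * g q + f q * Dd e g q := by
  unfold Dd
  rw [fderiv_fun_mul (hf q) (hg q)]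
  simp [smul_eq_mul]
  ring

lemma Dd_shift (hf : Differentiable ℝ f) (c : ℝ × Pt) (hc : ∀ q, f (q + c) = f q)
    (e q : ℝ × Pt) : Dd e f (q + c) = Dd e f q := by
  have hcomp : HasFDerivAt (fun r => f (r + c)) (fderiv ℝ f (q + c)) q := by
    have h1 : HasFDerivAt (fun r : ℝ × Pt => r + c) (ContinuousLinearMap.id ℝ (ℝ × Pt)) q :=
      (hasFDerivAt_id q).add_const c
    have := (hf (q + c)).hasFDerivAt.comp q h1
    simpa [Function.comp_def] using this
  have heq : (fun r => f (r + c)) = f := funext hc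
  rw [heq] at hcomp
  unfold Dd
  rw [hcomp.fderiv]

lemma shift_int {F : ℝ × Pt → ℝ} {c : ℝ × Pt} (hp : ∀ q, F (q + c) = F q) :
    ∀ (k : ℤ) (q : ℝ × Pt), F (q + k • c) = F q := by
  intro k
  induction k using Int.induction_on with
  | zero => simp
  | succ n ih =>
    intro q
    have h1 : q + ((n : ℤ) + 1) • c = (q + (n : ℤ) • c) + c := by
      rw [add_smul]; abel
    rw [h1, hp, ih]
  | pred n ih =>
    intro q
    have h1 : (q + (-(n : ℤ) - 1) • c) + c = q + (-(n:ℤ)) • c := by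
      rw [sub_smul]; abel
    have := hp (q + (-(n : ℤ) - 1) • c)
    rw [h1] at this
    rw [← ih q, ← this]

lemma deriv_zero_of_eqOn_Icc {Φ : ℝ → ℝ} {a b z0 d : ℝ} (hab : a < b) (hz0 : z0 ∈ Icc a b)
    (hΦ : HasDerivAt Φ d z0) (h0 : ∀ z ∈ Icc a b, Φ z = 0) : d = 0 := by
  have h1 : HasDerivWithinAt Φ d (Icc a b) z0 := hΦ.hasDerivWithinAt
  have h2 : HasDerivWithinAt Φ 0 (Icc a b) z0 :=
    (hasDerivWithinAt_const z0 (Icc a b) 0).congr h0 (h0 z0 hz0)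
  have hu : UniqueDiffWithinAt ℝ (Icc a b) z0 := uniqueDiffOn_Icc hab z0 hz0
  exact hu.eq_deriv _ h1 h2

end Infra

section Energy
open Real

lemma one_le_top' : (1 : WithTop ℕ∞) ≤ ((⊤:ℕ∞) : WithTop ℕ∞) := by
  exact_mod_cast (le_top : (1:ℕ∞) ≤ ⊤)

lemma top_diff {f : ℝ × Pt → ℝ} (hf : ContDiff ℝ (⊤:ℕ∞) f) : Differentiable ℝ f :=
  hf.differentiable (by simp)

def cell : Set (ℝ × ℝ) := Icc (-1:ℝ) 1 ×ˢ Icc (-1:ℝ) 1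

lemma cell_compact : IsCompact cell := IsCompact.prod isCompact_Icc isCompact_Icc

lemma cell_meas : MeasurableSet cell := (measurableSet_Icc).prod measurableSet_Icc

lemma iota_cont (z0 : ℝ) : Continuous (fun r : ℝ × (ℝ × ℝ) => ((r.1, (r.2.1, r.2.2, z0)) : ℝ × Pt)) := by
  fun_prop

set_option maxHeartbeats 1000000 in
lemma quad_est (M b1 b2 u1 u2 x1 y1 x2 y2 r1 r2 : ℝ) (hM : 0 ≤ M)
    (hb1 : |b1| ≤ M) (hb2 : |b2| ≤ M)
    (hr1 : |r1| ≤ M*(|u1|+|u2|)) (hr2 : |r2| ≤ M*(|u1|+|u2|)) :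
    -(2*u1*(b1*x1+b2*y1)) + 2*u1*r1 - 2*u2*(b1*x2+b2*y2) + 2*u2*r2
      ≤ 2*x1^2+2*y1^2+2*x2^2+2*y2^2 + (M^2+4*M)*(u1^2+u2^2) := by
  have h1 : -(2*u1*(b1*x1)) ≤ 2*x1^2 + (b1*u1)^2/2 := by nlinarith [sq_nonneg (2*x1 + b1*u1)]
  have h2 : -(2*u1*(b2*y1)) ≤ 2*y1^2 + (b2*u1)^2/2 := by nlinarith [sq_nonneg (2*y1 + b2*u1)]
  have h3 : -(2*u2*(b1*x2)) ≤ 2*x2^2 + (b1*u2)^2/2 := by nlinarith [sq_nonneg (2*x2 + b1*u2)]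
  have h4 : -(2*u2*(b2*y2)) ≤ 2*y2^2 + (b2*u2)^2/2 := by nlinarith [sq_nonneg (2*y2 + b2*u2)]
  have hb1' : b1^2 ≤ M^2 := by nlinarith [abs_nonneg b1, sq_abs b1]
  have hb2' : b2^2 ≤ M^2 := by nlinarith [abs_nonneg b2, sq_abs b2]
  obtain ⟨a1, ha1⟩ : ∃ a, a = |u1| := ⟨_, rfl⟩
  obtain ⟨a2, ha2⟩ : ∃ a, a = |u2| := ⟨_, rfl⟩
  have ha1n : 0 ≤ a1 := ha1 ▸ abs_nonneg u1
  have ha2n : 0 ≤ a2 := ha2 ▸ abs_nonneg u2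
  have hs1 : a1^2 = u1^2 := by rw [ha1]; exact sq_abs u1
  have hs2 : a2^2 = u2^2 := by rw [ha2]; exact sq_abs u2
  have h5 : 2*u1*r1 ≤ 2*(a1*(M*(a1+a2))) := by
    have hur : u1*r1 ≤ a1*(M*(a1+a2)) := by
      calc u1*r1 ≤ |u1*r1| := le_abs_self _
      _ = |u1| * |r1| := abs_mul _ _
      _ ≤ |u1| * (M*(|u1|+|u2|)) := by
          apply mul_le_mul_of_nonneg_left hr1 (abs_nonneg u1)
      _ = a1*(M*(a1+a2)) := by rw [ha1, ha2]
    linarith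
  have h6 : 2*u2*r2 ≤ 2*(a2*(M*(a1+a2))) := by
    have hur : u2*r2 ≤ a2*(M*(a1+a2)) := by
      calc u2*r2 ≤ |u2*r2| := le_abs_self _
      _ = |u2| * |r2| := abs_mul _ _
      _ ≤ |u2| * (M*(|u1|+|u2|)) := by
          apply mul_le_mul_of_nonneg_left hr2 (abs_nonneg u2)
      _ = a2*(M*(a1+a2)) := by rw [ha1, ha2]
    linarith
  have h7 : 2*(a1*(M*(a1+a2))) + 2*(a2*(M*(a1+a2))) ≤ 4*M*(u1^2+u2^2) := by
    have : 2*(a1*(M*(a1+a2))) + 2*(a2*(M*(a1+a2))) = 2*M*(a1+a2)^2 := by ring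
    rw [this]
    nlinarith [sq_nonneg (a1 - a2)]
  nlinarith [sq_nonneg u1, sq_nonneg u2]

lemma integral_DdX_zero (z0 t : ℝ) (H : ℝ × Pt → ℝ) (hH : ContDiff ℝ (⊤:ℕ∞) H)
    (hper : ∀ q, H (q + ((0:ℝ),((2:ℝ),(0:ℝ),(0:ℝ)))) = H q) :
    ∫ p in cell, Dd eX H (t,(p.1,p.2,z0)) = 0 := by
  have hDc : Continuous (Dd eX H) := (Dd_contDiff hH eX).continuous
  have hfc : Continuous (fun p : ℝ × ℝ => Dd eX H (t,(p.1,p.2,z0))) :=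
    hDc.comp (by fun_prop)
  have hint : IntegrableOn (fun p : ℝ × ℝ => Dd eX H (t,(p.1,p.2,z0))) cell volume :=
    hfc.continuousOn.integrableOn_compact cell_compact
  have hinner : ∀ y : ℝ, ∫ x in Icc (-1:ℝ) 1, Dd eX H (t,(x,y,z0)) = 0 := by
    intro y
    have hd : ∀ x : ℝ, HasDerivAt (fun x => H (t,(x,y,z0))) (Dd eX H (t,(x,y,z0))) x :=
      fun x => hasDerivAt_sliceX (top_diff hH) t x y z0
    have hde : (fun x => Dd eX H (t,(x,y,z0))) = deriv (fun x => H (t,(x,y,z0))) :=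
      funext fun x => ((hd x).deriv).symm
    rw [integral_Icc_eq_integral_Ioc, ← intervalIntegral.integral_of_le (by norm_num : (-1:ℝ) ≤ 1)]
    have h1 : ∫ x in (-1:ℝ)..1, Dd eX H (t,(x,y,z0))
        = ∫ x in (-1:ℝ)..1, deriv (fun x => H (t,(x,y,z0))) x := by rw [← hde]
    rw [h1, intervalIntegral.integral_deriv_eq_sub (fun x _ => (hd x).differentiableAt)
      (by rw [← hde]; exact (hfc.comp (by fun_prop : Continuous (fun x : ℝ => ((x,y) : ℝ × ℝ)))).intervalIntegrable _ _)]
    have : ((t,((-1:ℝ),y,z0)) : ℝ × Pt) + ((0:ℝ),((2:ℝ),(0:ℝ),(0:ℝ))) = (t,((1:ℝ),y,z0)) := by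
      simp [Prod.ext_iff]; norm_num
    rw [show H (t,((1:ℝ),y,z0)) = H (t,((-1:ℝ),y,z0)) from by rw [← this, hper], sub_self]
  rw [cell, Measure.volume_eq_prod]
  rw [setIntegral_prod _ (by rw [← Measure.volume_eq_prod]; exact hint)]
  have hswap : ∫ x in Icc (-1:ℝ) 1, ∫ y in Icc (-1:ℝ) 1, Dd eX H (t,(x,y,z0))
      = ∫ y in Icc (-1:ℝ) 1, ∫ x in Icc (-1:ℝ) 1, Dd eX H (t,(x,y,z0)) := by
    apply integral_integral_swap
    rw [Measure.prod_restrict]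
    rw [← Measure.volume_eq_prod]
    exact hint
  rw [hswap]
  simp only [hinner]
  simp

lemma integral_DdY_zero (z0 t : ℝ) (H : ℝ × Pt → ℝ) (hH : ContDiff ℝ (⊤:ℕ∞) H)
    (hper : ∀ q, H (q + ((0:ℝ),((0:ℝ),(2:ℝ),(0:ℝ)))) = H q) :
    ∫ p in cell, Dd eY H (t,(p.1,p.2,z0)) = 0 := by
  have hDc : Continuous (Dd eY H) := (Dd_contDiff hH eY).continuous
  have hfc : Continuous (fun p : ℝ × ℝ => Dd eY H (t,(p.1,p.2,z0))) :=
    hDc.comp (by fun_prop)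
  have hint : IntegrableOn (fun p : ℝ × ℝ => Dd eY H (t,(p.1,p.2,z0))) cell volume :=
    hfc.continuousOn.integrableOn_compact cell_compact
  have hinner : ∀ x : ℝ, ∫ y in Icc (-1:ℝ) 1, Dd eY H (t,(x,y,z0)) = 0 := by
    intro x
    have hd : ∀ y : ℝ, HasDerivAt (fun y => H (t,(x,y,z0))) (Dd eY H (t,(x,y,z0))) y :=
      fun y => hasDerivAt_sliceY (top_diff hH) t x y z0
    have hde : (fun y => Dd eY H (t,(x,y,z0))) = deriv (fun y => H (t,(x,y,z0))) :=
      funext fun y => ((hd y).deriv).symm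
    rw [integral_Icc_eq_integral_Ioc, ← intervalIntegral.integral_of_le (by norm_num : (-1:ℝ) ≤ 1)]
    have h1 : ∫ y in (-1:ℝ)..1, Dd eY H (t,(x,y,z0))
        = ∫ y in (-1:ℝ)..1, deriv (fun y => H (t,(x,y,z0))) y := by rw [← hde]
    rw [h1, intervalIntegral.integral_deriv_eq_sub (fun y _ => (hd y).differentiableAt)
      (by rw [← hde]; exact (hfc.comp (by fun_prop : Continuous (fun y : ℝ => ((x,y) : ℝ × ℝ)))).intervalIntegrable _ _)]
    have : ((t,(x,(-1:ℝ),z0)) : ℝ × Pt) + ((0:ℝ),((0:ℝ),(2:ℝ),(0:ℝ))) = (t,(x,(1:ℝ),z0)) := by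
      simp [Prod.ext_iff]; norm_num
    rw [show H (t,(x,(1:ℝ),z0)) = H (t,(x,(-1:ℝ),z0)) from by rw [← this, hper], sub_self]
  rw [cell, Measure.volume_eq_prod]
  rw [setIntegral_prod _ (by rw [← Measure.volume_eq_prod]; exact hint)]
  have : ∀ x : ℝ, ∫ y in Icc (-1:ℝ) 1, Dd eY H (t,(x,y,z0)) = 0 := hinner
  simp only [this]
  simp

end Energy

section Main
open Real

set_option maxHeartbeats 2000000 in
lemma energy_lemma (T z0 : ℝ) (hT : 0 < T)
    (U1 U2 B1 B2 R1 R2 : ℝ × Pt → ℝ)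
    (hU1 : ContDiff ℝ (⊤:ℕ∞) U1) (hU2 : ContDiff ℝ (⊤:ℕ∞) U2)
    (hB1c : Continuous B1) (hB2c : Continuous B2)
    (hR1c : Continuous R1) (hR2c : Continuous R2)
    (hperX1 : ∀ q, U1 (q + ((0:ℝ),((2:ℝ),(0:ℝ),(0:ℝ)))) = U1 q)
    (hperY1 : ∀ q, U1 (q + ((0:ℝ),((0:ℝ),(2:ℝ),(0:ℝ)))) = U1 q)
    (hperX2 : ∀ q, U2 (q + ((0:ℝ),((2:ℝ),(0:ℝ),(0:ℝ)))) = U2 q)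
    (hperY2 : ∀ q, U2 (q + ((0:ℝ),((0:ℝ),(2:ℝ),(0:ℝ)))) = U2 q)
    (M : ℝ) (hM0 : 0 ≤ M)
    (hbd : ∀ t ∈ Icc (0:ℝ) T, ∀ x ∈ Icc (-1:ℝ) 1, ∀ y ∈ Icc (-1:ℝ) 1,
      |B1 (t,(x,y,z0))| ≤ M ∧ |B2 (t,(x,y,z0))| ≤ M ∧
      |R1 (t,(x,y,z0))| ≤ M * (|U1 (t,(x,y,z0))| + |U2 (t,(x,y,z0))|) ∧
      |R2 (t,(x,y,z0))| ≤ M * (|U1 (t,(x,y,z0))| + |U2 (t,(x,y,z0))|))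
    (hpde1 : ∀ t ∈ Icc (0:ℝ) T, ∀ x y : ℝ,
      Dd eT U1 (t,(x,y,z0)) = Dd eX (Dd eX U1) (t,(x,y,z0)) + Dd eY (Dd eY U1) (t,(x,y,z0))
        - B1 (t,(x,y,z0)) * Dd eX U1 (t,(x,y,z0)) - B2 (t,(x,y,z0)) * Dd eY U1 (t,(x,y,z0))
        + R1 (t,(x,y,z0)))
    (hpde2 : ∀ t ∈ Icc (0:ℝ) T, ∀ x y : ℝ,
      Dd eT U2 (t,(x,y,z0)) = Dd eX (Dd eX U2) (t,(x,y,z0)) + Dd eY (Dd eY U2) (t,(x,y,z0))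
        - B1 (t,(x,y,z0)) * Dd eX U2 (t,(x,y,z0)) - B2 (t,(x,y,z0)) * Dd eY U2 (t,(x,y,z0))
        + R2 (t,(x,y,z0)))
    (hinit : ∀ x y : ℝ, U1 (0,(x,y,z0)) = 0 ∧ U2 (0,(x,y,z0)) = 0) :
    ∀ t ∈ Icc (0:ℝ) T, ∀ x y : ℝ, U1 (t,(x,y,z0)) = 0 ∧ U2 (t,(x,y,z0)) = 0 := by
  have hU1d : Differentiable ℝ U1 := top_diff hU1
  have hU2d : Differentiable ℝ U2 := top_diff hU2
  have hU1c : Continuous U1 := hU1.continuous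
  have hU2c : Continuous U2 := hU2.continuous
  set C : ℝ := M^2 + 4*M with hC
  have hC0 : 0 ≤ C := by positivity
  set ι : ℝ × (ℝ × ℝ) → ℝ × Pt := fun r => (r.1, (r.2.1, r.2.2, z0)) with hι
  have hιc : Continuous ι := iota_cont z0
  set φ : ℝ → ℝ × ℝ → ℝ := fun t p => (U1 (ι (t,p)))^2 + (U2 (ι (t,p)))^2 with hφ
  set φ' : ℝ → ℝ × ℝ → ℝ := fun t p =>
    2 * U1 (ι (t,p)) * Dd eT U1 (ι (t,p)) + 2 * U2 (ι (t,p)) * Dd eT U2 (ι (t,p)) with hφ'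
  set ψ : ℝ → ℝ × ℝ → ℝ := fun t p =>
      2 * Dd eX (fun q => U1 q * Dd eX U1 q) (ι (t,p))
    + 2 * Dd eY (fun q => U1 q * Dd eY U1 q) (ι (t,p))
    + 2 * Dd eX (fun q => U2 q * Dd eX U2 q) (ι (t,p))
    + 2 * Dd eY (fun q => U2 q * Dd eY U2 q) (ι (t,p)) with hψ
  set E : ℝ → ℝ := fun t => ∫ p in cell, φ t p with hE
  -- continuity of derivative fields
  have hD1 : ∀ e, Continuous (Dd e U1) := fun e => (Dd_contDiff hU1 e).continuous
  have hD2 : ∀ e, Continuous (Dd e U2) := fun e => (Dd_contDiff hU2 e).continuous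
  have hDD1 : ∀ e e', Continuous (Dd e (Dd e' U1)) :=
    fun e e' => (Dd_contDiff (Dd_contDiff hU1 e') e).continuous
  have hDD2 : ∀ e e', Continuous (Dd e (Dd e' U2)) :=
    fun e e' => (Dd_contDiff (Dd_contDiff hU2 e') e).continuous
  have hM1 : ContDiff ℝ (⊤:ℕ∞) (fun q => U1 q * Dd eX U1 q) := hU1.mul (Dd_contDiff hU1 eX)
  have hM2 : ContDiff ℝ (⊤:ℕ∞) (fun q => U1 q * Dd eY U1 q) := hU1.mul (Dd_contDiff hU1 eY)
  have hM3 : ContDiff ℝ (⊤:ℕ∞) (fun q => U2 q * Dd eX U2 q) := hU2.mul (Dd_contDiff hU2 eX)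
  have hM4 : ContDiff ℝ (⊤:ℕ∞) (fun q => U2 q * Dd eY U2 q) := hU2.mul (Dd_contDiff hU2 eY)
  -- joint continuity
  have hφjc : Continuous (fun r : ℝ × (ℝ × ℝ) => φ r.1 r.2) := by
    simp only [hφ]
    exact (((hU1c.comp hιc).pow 2).add ((hU2c.comp hιc).pow 2))
  have hφ'jc : Continuous (fun r : ℝ × (ℝ × ℝ) => φ' r.1 r.2) := by
    simp only [hφ']
    exact ((continuous_const.mul (hU1c.comp hιc)).mul ((hD1 eT).comp hιc)).add
      ((continuous_const.mul (hU2c.comp hιc)).mul ((hD2 eT).comp hιc))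
  have hψjc : Continuous (fun r : ℝ × (ℝ × ℝ) => ψ r.1 r.2) := by
    simp only [hψ]
    exact (((continuous_const.mul (((Dd_contDiff hM1 eX).continuous).comp hιc)).add
      (continuous_const.mul (((Dd_contDiff hM2 eY).continuous).comp hιc))).add
      (continuous_const.mul (((Dd_contDiff hM3 eX).continuous).comp hιc))).add
      (continuous_const.mul (((Dd_contDiff hM4 eY).continuous).comp hιc))
  -- integrability on the cell, for each fixed t
  have hφint : ∀ t, IntegrableOn (φ t) cell volume := fun t =>
    ((hφjc.comp (Continuous.prodMk_right t)).continuousOn).integrableOn_compact cell_compact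
  have hφ'int : ∀ t, IntegrableOn (φ' t) cell volume := fun t =>
    ((hφ'jc.comp (Continuous.prodMk_right t)).continuousOn).integrableOn_compact cell_compact
  have hψint : ∀ t, IntegrableOn (ψ t) cell volume := fun t =>
    ((hψjc.comp (Continuous.prodMk_right t)).continuousOn).integrableOn_compact cell_compact
  -- time derivative of φ pointwise
  have hDφ : ∀ t p, HasDerivAt (fun s => φ s p) (φ' t p) t := by
    intro t p
    have h1 := hasDerivAt_sliceT hU1d t (p.1, p.2, z0)
    have h2 := hasDerivAt_sliceT hU2d t (p.1, p.2, z0)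
    have := (h1.fun_pow 2).fun_add (h2.fun_pow 2)
    simpa [hφ, hφ', hι, pow_one, mul_assoc, mul_comm, mul_left_comm] using this
  -- derivative of the energy
  have hEderiv : ∀ t0 : ℝ, HasDerivAt E (∫ p in cell, φ' t0 p) t0 := by
    intro t0
    have hcpt : IsCompact ((Icc (t0-1) (t0+1)) ×ˢ cell) := isCompact_Icc.prod cell_compact
    obtain ⟨C0, hC0b⟩ := hcpt.exists_bound_of_continuousOn hφ'jc.continuousOn
    have main := hasDerivAt_integral_of_dominated_loc_of_deriv_le
      (F := fun t p => φ t p) (F' := fun t p => φ' t p) (μ := volume.restrict cell)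
      (x₀ := t0) (bound := fun _ => C0) (s := Metric.ball t0 1) (Metric.ball_mem_nhds t0 one_pos)
      (Filter.Eventually.of_forall fun t =>
        ((hφjc.comp (Continuous.prodMk_right t)).aestronglyMeasurable))
      (hφint t0)
      ((hφ'jc.comp (Continuous.prodMk_right t0)).aestronglyMeasurable)
      ?_ (integrableOn_const (cell_compact.measure_lt_top.ne))
      (Filter.Eventually.of_forall fun p t _ => hDφ t p)
    · exact main.2
    · filter_upwards [ae_restrict_mem cell_meas] with p hp t ht
      have ht' : t ∈ Icc (t0-1) (t0+1) := by
        rw [Metric.mem_ball, Real.dist_eq] at ht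
        have := abs_lt.1 ht
        constructor <;> linarith [this.1, this.2]
      exact hC0b (t, p) ⟨ht', hp⟩
  -- the divergence-form part integrates to zero
  have hψzero : ∀ t : ℝ, ∫ p in cell, ψ t p = 0 := by
    intro t
    have c1 : Continuous (fun p : ℝ × ℝ => Dd eX (fun q => U1 q * Dd eX U1 q) (ι (t,p))) :=
      ((Dd_contDiff hM1 eX).continuous).comp (hιc.comp (Continuous.prodMk_right t))
    have c2 : Continuous (fun p : ℝ × ℝ => Dd eY (fun q => U1 q * Dd eY U1 q) (ι (t,p))) :=
      ((Dd_contDiff hM2 eY).continuous).comp (hιc.comp (Continuous.prodMk_right t))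
    have c3 : Continuous (fun p : ℝ × ℝ => Dd eX (fun q => U2 q * Dd eX U2 q) (ι (t,p))) :=
      ((Dd_contDiff hM3 eX).continuous).comp (hιc.comp (Continuous.prodMk_right t))
    have c4 : Continuous (fun p : ℝ × ℝ => Dd eY (fun q => U2 q * Dd eY U2 q) (ι (t,p))) :=
      ((Dd_contDiff hM4 eY).continuous).comp (hιc.comp (Continuous.prodMk_right t))
    have i1 : IntegrableOn _ cell volume := (c1.continuousOn (s := cell)).integrableOn_compact cell_compact
    have i2 : IntegrableOn _ cell volume := (c2.continuousOn (s := cell)).integrableOn_compact cell_compact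
    have i3 : IntegrableOn _ cell volume := (c3.continuousOn (s := cell)).integrableOn_compact cell_compact
    have i4 : IntegrableOn _ cell volume := (c4.continuousOn (s := cell)).integrableOn_compact cell_compact
    have perM1x : ∀ q, (fun q => U1 q * Dd eX U1 q) (q + ((0:ℝ),((2:ℝ),(0:ℝ),(0:ℝ))))
        = U1 q * Dd eX U1 q := fun q => by
      simp only [hperX1 q, Dd_shift hU1d _ hperX1 eX q]
    have perM2y : ∀ q, (fun q => U1 q * Dd eY U1 q) (q + ((0:ℝ),((0:ℝ),(2:ℝ),(0:ℝ))))
        = U1 q * Dd eY U1 q := fun q => by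
      simp only [hperY1 q, Dd_shift hU1d _ hperY1 eY q]
    have perM3x : ∀ q, (fun q => U2 q * Dd eX U2 q) (q + ((0:ℝ),((2:ℝ),(0:ℝ),(0:ℝ))))
        = U2 q * Dd eX U2 q := fun q => by
      simp only [hperX2 q, Dd_shift hU2d _ hperX2 eX q]
    have perM4y : ∀ q, (fun q => U2 q * Dd eY U2 q) (q + ((0:ℝ),((0:ℝ),(2:ℝ),(0:ℝ))))
        = U2 q * Dd eY U2 q := fun q => by
      simp only [hperY2 q, Dd_shift hU2d _ hperY2 eY q]
    have z1 := integral_DdX_zero z0 t _ hM1 perM1x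
    have z2 := integral_DdY_zero z0 t _ hM2 perM2y
    have z3 := integral_DdX_zero z0 t _ hM3 perM3x
    have z4 := integral_DdY_zero z0 t _ hM4 perM4y
    have expand : ∫ p in cell, ψ t p
        = (((∫ p in cell, 2 * Dd eX (fun q => U1 q * Dd eX U1 q) (ι (t,p)))
          + ∫ p in cell, 2 * Dd eY (fun q => U1 q * Dd eY U1 q) (ι (t,p)))
          + ∫ p in cell, 2 * Dd eX (fun q => U2 q * Dd eX U2 q) (ι (t,p)))
          + ∫ p in cell, 2 * Dd eY (fun q => U2 q * Dd eY U2 q) (ι (t,p)) := by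
      simp only [hψ]
      rw [integral_add (μ := volume.restrict cell)
            (f := fun p : ℝ × ℝ => 2 * Dd eX (fun q => U1 q * Dd eX U1 q) (ι (t,p))
              + 2 * Dd eY (fun q => U1 q * Dd eY U1 q) (ι (t,p))
              + 2 * Dd eX (fun q => U2 q * Dd eX U2 q) (ι (t,p)))
            (g := fun p : ℝ × ℝ => 2 * Dd eY (fun q => U2 q * Dd eY U2 q) (ι (t,p)))
            (((((i1.const_mul 2).add (i2.const_mul 2))).add (i3.const_mul 2)))
            ((i4.const_mul 2)),
          integral_add (μ := volume.restrict cell)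
            (f := fun p : ℝ × ℝ => 2 * Dd eX (fun q => U1 q * Dd eX U1 q) (ι (t,p))
              + 2 * Dd eY (fun q => U1 q * Dd eY U1 q) (ι (t,p)))
            (g := fun p : ℝ × ℝ => 2 * Dd eX (fun q => U2 q * Dd eX U2 q) (ι (t,p)))
            (((i1.const_mul 2).add (i2.const_mul 2))) ((i3.const_mul 2)),
          integral_add (μ := volume.restrict cell)
            (f := fun p : ℝ × ℝ => 2 * Dd eX (fun q => U1 q * Dd eX U1 q) (ι (t,p)))
            (g := fun p : ℝ × ℝ => 2 * Dd eY (fun q => U1 q * Dd eY U1 q) (ι (t,p)))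
            ((i1.const_mul 2)) ((i2.const_mul 2))]
    rw [expand]
    simp only [integral_const_mul]
    have hiota : (∀ p : ℝ × ℝ, ι (t,p) = (t,(p.1,p.2,z0))) := fun p => rfl
    simp only [hiota] at *
    rw [z1, z2, z3, z4]
    ring
  -- pointwise differential inequality
  have hpt : ∀ t ∈ Icc (0:ℝ) T, ∀ p : ℝ × ℝ, p ∈ cell → φ' t p ≤ ψ t p + C * φ t p := by
    intro t ht p hp
    obtain ⟨hx, hy⟩ := hp
    obtain ⟨hb1, hb2, hr1, hr2⟩ := hbd t ht p.1 hx p.2 hy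
    have e1 := hpde1 t ht p.1 p.2
    have e2 := hpde2 t ht p.1 p.2
    have hDX1 : Differentiable ℝ (Dd eX U1) := top_diff (Dd_contDiff hU1 eX)
    have hDY1 : Differentiable ℝ (Dd eY U1) := top_diff (Dd_contDiff hU1 eY)
    have hDX2 : Differentiable ℝ (Dd eX U2) := top_diff (Dd_contDiff hU2 eX)
    have hDY2 : Differentiable ℝ (Dd eY U2) := top_diff (Dd_contDiff hU2 eY)
    have m1 := Dd_mul hU1d hDX1 eX (t,(p.1,p.2,z0))
    have m2 := Dd_mul hU1d hDY1 eY (t,(p.1,p.2,z0))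
    have m3 := Dd_mul hU2d hDX2 eX (t,(p.1,p.2,z0))
    have m4 := Dd_mul hU2d hDY2 eY (t,(p.1,p.2,z0))
    have hiota : ι (t,p) = (t,(p.1,p.2,z0)) := rfl
    simp only [hφ, hφ', hψ, hiota]
    rw [m1, m2, m3, m4, e1, e2]
    have key := quad_est M (B1 (t,(p.1,p.2,z0))) (B2 (t,(p.1,p.2,z0)))
      (U1 (t,(p.1,p.2,z0))) (U2 (t,(p.1,p.2,z0)))
      (Dd eX U1 (t,(p.1,p.2,z0))) (Dd eY U1 (t,(p.1,p.2,z0)))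
      (Dd eX U2 (t,(p.1,p.2,z0))) (Dd eY U2 (t,(p.1,p.2,z0)))
      (R1 (t,(p.1,p.2,z0))) (R2 (t,(p.1,p.2,z0))) hM0 hb1 hb2 hr1 hr2
    nlinarith [key]
  -- energy differential inequality
  have hE'le : ∀ t ∈ Icc (0:ℝ) T, (∫ p in cell, φ' t p) ≤ C * E t := by
    intro t ht
    have h1 : (∫ p in cell, φ' t p) ≤ ∫ p in cell, (ψ t p + C * φ t p) :=
      setIntegral_mono_on (hφ'int t) ((hψint t).add ((hφint t).const_mul C)) cell_meas
        (fun p hp => hpt t ht p hp)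
    rw [integral_add (hψint t) ((hφint t).const_mul C), hψzero t, integral_const_mul] at h1
    simpa [hE] using h1
  have hE0 : E 0 = 0 := by
    have hz : ∀ p : ℝ × ℝ, φ 0 p = 0 := by
      intro p
      have hiota : ι (0,p) = ((0:ℝ),(p.1,p.2,z0)) := rfl
      simp only [hφ, hiota, (hinit p.1 p.2).1, (hinit p.1 p.2).2]
      norm_num
    simp only [hE, hz, integral_zero]
  have hEnn : ∀ t, 0 ≤ E t := by
    intro t
    apply setIntegral_nonneg cell_meas
    intro p _
    simp only [hφ]
    positivity
  have hEcont : Continuous E :=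
    continuous_iff_continuousAt.2 fun t => (hEderiv t).continuousAt
  -- Gronwall
  have hEzero : ∀ t ∈ Icc (0:ℝ) T, E t = 0 := by
    have hFd : ∀ s : ℝ, HasDerivAt (fun s => E s * Real.exp (-C * s))
        ((∫ p in cell, φ' s p) * Real.exp (-C*s) + E s * (Real.exp (-C*s) * (-C * 1))) s := by
      intro s
      exact (hEderiv s).mul (((hasDerivAt_id s).const_mul (-C)).exp)
    have hanti : AntitoneOn (fun s => E s * Real.exp (-C * s)) (Icc 0 T) := by
      apply antitoneOn_of_deriv_nonpos (convex_Icc 0 T)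
      · exact (hEcont.mul (Real.continuous_exp.comp (continuous_const.mul continuous_id))).continuousOn
      · exact fun s _ => ((hFd s).differentiableAt).differentiableWithinAt
      · intro s hs
        rw [interior_Icc] at hs
        rw [(hFd s).deriv]
        have h := hE'le s ⟨hs.1.le, hs.2.le⟩
        have he : 0 < Real.exp (-C*s) := Real.exp_pos _
        nlinarith [mul_le_mul_of_nonneg_right h he.le]
    intro t ht
    have h1 : E t * Real.exp (-C * t) ≤ E 0 * Real.exp (-C * 0) :=
      hanti (left_mem_Icc.2 hT.le) ht ht.1
    rw [hE0] at h1
    have he : 0 < Real.exp (-C*t) := Real.exp_pos _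
    nlinarith [hEnn t]
  -- vanishing on the cell
  have hcell0 : ∀ t ∈ Icc (0:ℝ) T, ∀ p ∈ cell, φ t p = 0 := by
    intro t ht
    have hnn : 0 ≤ φ t := by
      intro p
      simp only [hφ]
      positivity
    have hae : φ t =ᵐ[volume.restrict cell] 0 :=
      (integral_eq_zero_iff_of_nonneg hnn (hφint t)).1 (hEzero t ht)
    have hsub : cell ⊆ closure (interior cell) := by
      rw [cell, interior_prod_eq, interior_Icc, closure_prod_eq,
        closure_Ioo (by norm_num : (-1:ℝ) ≠ 1)]
    have := Measure.eqOn_of_ae_eq hae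
      ((hφjc.comp (Continuous.prodMk_right t)).continuousOn) continuousOn_const hsub
    exact fun p hp => this hp
  -- conclusion for all (x, y) by periodicity
  intro t ht x y
  set k : ℤ := ⌊(x+1)/2⌋ with hk
  set l : ℤ := ⌊(y+1)/2⌋ with hl
  have hx' : x - 2*(k:ℝ) ∈ Icc (-1:ℝ) 1 := by
    constructor
    · have := Int.floor_le ((x+1)/2)
      rw [← hk] at this
      linarith
    · have := Int.lt_floor_add_one ((x+1)/2)
      rw [← hk] at this
      linarith
  have hy' : y - 2*(l:ℝ) ∈ Icc (-1:ℝ) 1 := by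
    constructor
    · have := Int.floor_le ((y+1)/2)
      rw [← hl] at this
      linarith
    · have := Int.lt_floor_add_one ((y+1)/2)
      rw [← hl] at this
      linarith
  have hshift : ((t,(x,y,z0)) : ℝ × Pt)
      = ((t,(x - 2*(k:ℝ), y - 2*(l:ℝ), z0)) : ℝ × Pt)
        + k • ((0:ℝ),((2:ℝ),(0:ℝ),(0:ℝ))) + l • ((0:ℝ),((0:ℝ),(2:ℝ),(0:ℝ))) := by
    have h1 : k • (((0:ℝ),((2:ℝ),(0:ℝ),(0:ℝ))) : ℝ × Pt) = ((0:ℝ),((2*(k:ℝ)),(0:ℝ),(0:ℝ))) := by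
      simp [Prod.ext_iff, mul_comm]
    have h2 : l • (((0:ℝ),((0:ℝ),(2:ℝ),(0:ℝ))) : ℝ × Pt) = ((0:ℝ),((0:ℝ),(2*(l:ℝ)),(0:ℝ))) := by
      simp [Prod.ext_iff, mul_comm]
    rw [h1, h2]
    simp only [Prod.mk_add_mk, Prod.ext_iff]
    refine ⟨by ring, by ring, by ring, by ring⟩
  have hmem : ((x - 2*(k:ℝ), y - 2*(l:ℝ)) : ℝ × ℝ) ∈ cell := ⟨hx', hy'⟩
  have hφ0 := hcell0 t ht _ hmem
  have hiota : ι (t, ((x - 2*(k:ℝ), y - 2*(l:ℝ)) : ℝ × ℝ))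
      = ((t,(x - 2*(k:ℝ), y - 2*(l:ℝ), z0)) : ℝ × Pt) := rfl
  simp only [hφ, hiota] at hφ0
  have hz1 : U1 (t,(x - 2*(k:ℝ), y - 2*(l:ℝ), z0)) = 0 := by nlinarith [sq_nonneg (U1 (t,(x - 2*(k:ℝ), y - 2*(l:ℝ), z0))), sq_nonneg (U2 (t,(x - 2*(k:ℝ), y - 2*(l:ℝ), z0)))]
  have hz2 : U2 (t,(x - 2*(k:ℝ), y - 2*(l:ℝ), z0)) = 0 := by nlinarith [sq_nonneg (U1 (t,(x - 2*(k:ℝ), y - 2*(l:ℝ), z0))), sq_nonneg (U2 (t,(x - 2*(k:ℝ), y - 2*(l:ℝ), z0)))]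
  constructor
  · rw [hshift, shift_int hperY1 l, shift_int hperX1 k, hz1]
  · rw [hshift, shift_int hperY2 l, shift_int hperX2 k, hz2]

end Main

section RB
open Set

lemma Rbound (a b c u1 u2 M0 : ℝ) (hM0 : 0 ≤ M0) (ha : |a| ≤ M0) (hb : |b| ≤ M0)
    (hc : |c| ≤ M0) :
    |(-(u1*a + u2*b) + (a + c)*u1)| ≤ 3*M0*(|u1|+|u2|) := by
  have h1 : |(-(u1*a + u2*b) + (a + c)*u1)| ≤ |u1| * |a| + |u2| * |b| + |a + c| * |u1| := by
    calc |(-(u1*a + u2*b) + (a + c)*u1)| ≤ |(-(u1*a + u2*b))| + |(a+c)*u1| := abs_add_le _ _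
    _ ≤ |u1*a| + |u2*b| + |(a+c)*u1| := by
        rw [abs_neg]
        have := abs_add_le (u1*a) (u2*b)
        linarith
    _ = |u1| * |a| + |u2| * |b| + |a + c| * |u1| := by rw [abs_mul, abs_mul, abs_mul]
  have hac : |a + c| ≤ 2*M0 := (abs_add_le a c).trans (by linarith)
  have e1 := mul_le_mul_of_nonneg_left ha (abs_nonneg u1)
  have e2 := mul_le_mul_of_nonneg_left hb (abs_nonneg u2)
  have e3 := mul_le_mul_of_nonneg_right hac (abs_nonneg u1)
  nlinarith [abs_nonneg u1, abs_nonneg u2]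

lemma Rbound2 (a b c u1 u2 M0 : ℝ) (hM0 : 0 ≤ M0) (ha : |a| ≤ M0) (hb : |b| ≤ M0)
    (hc : |c| ≤ M0) :
    |(-(u1*a + u2*b) + (c + b)*u2)| ≤ 3*M0*(|u1|+|u2|) := by
  have h1 : |(-(u1*a + u2*b) + (c + b)*u2)| ≤ |u1| * |a| + |u2| * |b| + |c + b| * |u2| := by
    calc |(-(u1*a + u2*b) + (c + b)*u2)| ≤ |(-(u1*a + u2*b))| + |(c+b)*u2| := abs_add_le _ _
    _ ≤ |u1*a| + |u2*b| + |(c+b)*u2| := by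
        rw [abs_neg]
        have := abs_add_le (u1*a) (u2*b)
        linarith
    _ = |u1| * |a| + |u2| * |b| + |c + b| * |u2| := by rw [abs_mul, abs_mul, abs_mul]
  have hac : |c + b| ≤ 2*M0 := (abs_add_le c b).trans (by linarith)
  have e1 := mul_le_mul_of_nonneg_left ha (abs_nonneg u1)
  have e2 := mul_le_mul_of_nonneg_left hb (abs_nonneg u2)
  have e3 := mul_le_mul_of_nonneg_right hac (abs_nonneg u2)
  nlinarith [abs_nonneg u1, abs_nonneg u2]

end RB

set_option maxHeartbeats 4000000 in
/-- homogeneous Neumann conditions on the top/bottom boundary are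
preserved in time by the primitive equations with horizontal viscosity. -/
theorem stmt15 (h T : ℝ) (hh : 0 < h) (hT : 0 < T)
    (v : ℝ → Pt → ℝ × ℝ) (w : ℝ → Pt → ℝ) (pr : ℝ → Pt → ℝ)
    (hv : ContDiff ℝ (⊤ : ℕ∞) (fun q : ℝ × Pt => v q.1 q.2))
    (hw : ContDiff ℝ (⊤ : ℕ∞) (fun q : ℝ × Pt => w q.1 q.2))
    (hpr : ContDiff ℝ (⊤ : ℕ∞) (fun q : ℝ × Pt => pr q.1 q.2))
    (hvper : ∀ t, HPerF (v t)) (hwper : ∀ t, HPerF (w t)) (hprper : ∀ t, HPerF (pr t))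
    (hmom1 : ∀ t ∈ Icc (0:ℝ) T, ∀ p : Pt, p.2.2 ∈ Icc (-h) h →
      deriv (fun s => (v s p).1) t
        + ((v t p).1 * dX (fun q => (v t q).1) p + (v t p).2 * dY (fun q => (v t q).1) p)
        + w t p * dZ (fun q => (v t q).1) p
        - (dX (dX (fun q => (v t q).1)) p + dY (dY (fun q => (v t q).1)) p)
        + dX (pr t) p = 0)
    (hmom2 : ∀ t ∈ Icc (0:ℝ) T, ∀ p : Pt, p.2.2 ∈ Icc (-h) h →
      deriv (fun s => (v s p).2) t
        + ((v t p).1 * dX (fun q => (v t q).2) p + (v t p).2 * dY (fun q => (v t q).2) p)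
        + w t p * dZ (fun q => (v t q).2) p
        - (dX (dX (fun q => (v t q).2)) p + dY (dY (fun q => (v t q).2)) p)
        + dY (pr t) p = 0)
    (hhydro : ∀ t ∈ Icc (0:ℝ) T, ∀ p : Pt, p.2.2 ∈ Icc (-h) h → dZ (pr t) p = 0)
    (hdiv : ∀ t ∈ Icc (0:ℝ) T, ∀ p : Pt, p.2.2 ∈ Icc (-h) h →
      dX (fun q => (v t q).1) p + dY (fun q => (v t q).2) p + dZ (w t) p = 0)
    (hwb : ∀ t ∈ Icc (0:ℝ) T, ∀ x y : ℝ, w t (x, y, -h) = 0 ∧ w t (x, y, h) = 0)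
    (z0 : ℝ) (hz0 : z0 = h ∨ z0 = -h)
    (hinit : ∀ x y : ℝ,
      dZ (fun q => (v 0 q).1) (x, y, z0) = 0 ∧ dZ (fun q => (v 0 q).2) (x, y, z0) = 0) :
    ∀ t ∈ Icc (0:ℝ) T, ∀ x y : ℝ,
      dZ (fun q => (v t q).1) (x, y, z0) = 0 ∧ dZ (fun q => (v t q).2) (x, y, z0) = 0 := by
  have hv' : ContDiff ℝ (⊤:ℕ∞) (fun q : ℝ × Pt => v q.1 q.2) := hv.of_le (by simp)
  have hw' : ContDiff ℝ (⊤:ℕ∞) (fun q : ℝ × Pt => w q.1 q.2) := hw.of_le (by simp)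
  have hpr' : ContDiff ℝ (⊤:ℕ∞) (fun q : ℝ × Pt => pr q.1 q.2) := hpr.of_le (by simp)
  have hV1 : ContDiff ℝ (⊤:ℕ∞) (fun q : ℝ × Pt => (v q.1 q.2).1) := contDiff_fst.comp hv'
  have hV2 : ContDiff ℝ (⊤:ℕ∞) (fun q : ℝ × Pt => (v q.1 q.2).2) := contDiff_snd.comp hv'
  set V1 : ℝ × Pt → ℝ := fun q => (v q.1 q.2).1 with hV1def
  set V2 : ℝ × Pt → ℝ := fun q => (v q.1 q.2).2 with hV2def
  set Wf : ℝ × Pt → ℝ := fun q => w q.1 q.2 with hWdef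
  set P : ℝ × Pt → ℝ := fun q => pr q.1 q.2 with hPdef
  have hW : ContDiff ℝ (⊤:ℕ∞) Wf := hw'
  have hP : ContDiff ℝ (⊤:ℕ∞) P := hpr'
  have hV1d : Differentiable ℝ V1 := top_diff hV1
  have hV2d : Differentiable ℝ V2 := top_diff hV2
  have hWd : Differentiable ℝ Wf := top_diff hW
  have hPd : Differentiable ℝ P := top_diff hP
  have hIcc : z0 ∈ Icc (-h) h := by
    rcases hz0 with h1 | h1 <;> rw [h1] <;> constructor <;> linarith
  -- conversion lemmas
  have cT1 : ∀ (t : ℝ) (p : Pt), deriv (fun s => (v s p).1) t = Dd eT V1 (t, p) :=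
    fun t p => (hasDerivAt_sliceT hV1d t p).deriv
  have cT2 : ∀ (t : ℝ) (p : Pt), deriv (fun s => (v s p).2) t = Dd eT V2 (t, p) :=
    fun t p => (hasDerivAt_sliceT hV2d t p).deriv
  have cX1 : ∀ (t : ℝ) (p : Pt), dX (fun q => (v t q).1) p = Dd eX V1 (t, p) :=
    fun t p => fderiv_slice hV1d t p ((1:ℝ),(0:ℝ),(0:ℝ))
  have cY1 : ∀ (t : ℝ) (p : Pt), dY (fun q => (v t q).1) p = Dd eY V1 (t, p) :=
    fun t p => fderiv_slice hV1d t p ((0:ℝ),(1:ℝ),(0:ℝ))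
  have cZ1 : ∀ (t : ℝ) (p : Pt), dZ (fun q => (v t q).1) p = Dd eZ V1 (t, p) :=
    fun t p => fderiv_slice hV1d t p ((0:ℝ),(0:ℝ),(1:ℝ))
  have cX2 : ∀ (t : ℝ) (p : Pt), dX (fun q => (v t q).2) p = Dd eX V2 (t, p) :=
    fun t p => fderiv_slice hV2d t p ((1:ℝ),(0:ℝ),(0:ℝ))
  have cY2 : ∀ (t : ℝ) (p : Pt), dY (fun q => (v t q).2) p = Dd eY V2 (t, p) :=
    fun t p => fderiv_slice hV2d t p ((0:ℝ),(1:ℝ),(0:ℝ))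
  have cZ2 : ∀ (t : ℝ) (p : Pt), dZ (fun q => (v t q).2) p = Dd eZ V2 (t, p) :=
    fun t p => fderiv_slice hV2d t p ((0:ℝ),(0:ℝ),(1:ℝ))
  have cZw : ∀ (t : ℝ) (p : Pt), dZ (w t) p = Dd eZ Wf (t, p) :=
    fun t p => fderiv_slice hWd t p ((0:ℝ),(0:ℝ),(1:ℝ))
  have cXpr : ∀ (t : ℝ) (p : Pt), dX (pr t) p = Dd eX P (t, p) :=
    fun t p => fderiv_slice hPd t p ((1:ℝ),(0:ℝ),(0:ℝ))
  have cYpr : ∀ (t : ℝ) (p : Pt), dY (pr t) p = Dd eY P (t, p) :=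
    fun t p => fderiv_slice hPd t p ((0:ℝ),(1:ℝ),(0:ℝ))
  have cZpr : ∀ (t : ℝ) (p : Pt), dZ (pr t) p = Dd eZ P (t, p) :=
    fun t p => fderiv_slice hPd t p ((0:ℝ),(0:ℝ),(1:ℝ))
  have cXX1 : ∀ (t : ℝ) (p : Pt), dX (dX (fun q => (v t q).1)) p = Dd eX (Dd eX V1) (t, p) := by
    intro t p
    rw [show dX (fun q => (v t q).1) = fun p' => Dd eX V1 (t, p') from funext fun p' => cX1 t p']
    exact fderiv_slice (top_diff (Dd_contDiff hV1 eX)) t p ((1:ℝ),(0:ℝ),(0:ℝ))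
  have cYY1 : ∀ (t : ℝ) (p : Pt), dY (dY (fun q => (v t q).1)) p = Dd eY (Dd eY V1) (t, p) := by
    intro t p
    rw [show dY (fun q => (v t q).1) = fun p' => Dd eY V1 (t, p') from funext fun p' => cY1 t p']
    exact fderiv_slice (top_diff (Dd_contDiff hV1 eY)) t p ((0:ℝ),(1:ℝ),(0:ℝ))
  have cXX2 : ∀ (t : ℝ) (p : Pt), dX (dX (fun q => (v t q).2)) p = Dd eX (Dd eX V2) (t, p) := by
    intro t p
    rw [show dX (fun q => (v t q).2) = fun p' => Dd eX V2 (t, p') from funext fun p' => cX2 t p']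
    exact fderiv_slice (top_diff (Dd_contDiff hV2 eX)) t p ((1:ℝ),(0:ℝ),(0:ℝ))
  have cYY2 : ∀ (t : ℝ) (p : Pt), dY (dY (fun q => (v t q).2)) p = Dd eY (Dd eY V2) (t, p) := by
    intro t p
    rw [show dY (fun q => (v t q).2) = fun p' => Dd eY V2 (t, p') from funext fun p' => cY2 t p']
    exact fderiv_slice (top_diff (Dd_contDiff hV2 eY)) t p ((0:ℝ),(1:ℝ),(0:ℝ))
  -- periodicity
  have hVper1X : ∀ q : ℝ × Pt, V1 (q + ((0:ℝ),((2:ℝ),(0:ℝ),(0:ℝ)))) = V1 q := by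
    intro q
    have hq : q + ((0:ℝ),((2:ℝ),(0:ℝ),(0:ℝ))) = (q.1, (q.2.1 + 2, q.2.2.1, q.2.2.2)) := by
      simp [Prod.ext_iff]
    rw [hq]
    show (v q.1 (q.2.1 + 2, q.2.2.1, q.2.2.2)).1 = (v q.1 q.2).1
    rw [(hvper q.1 q.2.1 q.2.2.1 q.2.2.2).1]
  have hVper1Y : ∀ q : ℝ × Pt, V1 (q + ((0:ℝ),((0:ℝ),(2:ℝ),(0:ℝ)))) = V1 q := by
    intro q
    have hq : q + ((0:ℝ),((0:ℝ),(2:ℝ),(0:ℝ))) = (q.1, (q.2.1, q.2.2.1 + 2, q.2.2.2)) := by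
      simp [Prod.ext_iff]
    rw [hq]
    show (v q.1 (q.2.1, q.2.2.1 + 2, q.2.2.2)).1 = (v q.1 q.2).1
    rw [(hvper q.1 q.2.1 q.2.2.1 q.2.2.2).2]
  have hVper2X : ∀ q : ℝ × Pt, V2 (q + ((0:ℝ),((2:ℝ),(0:ℝ),(0:ℝ)))) = V2 q := by
    intro q
    have hq : q + ((0:ℝ),((2:ℝ),(0:ℝ),(0:ℝ))) = (q.1, (q.2.1 + 2, q.2.2.1, q.2.2.2)) := by
      simp [Prod.ext_iff]
    rw [hq]
    show (v q.1 (q.2.1 + 2, q.2.2.1, q.2.2.2)).2 = (v q.1 q.2).2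
    rw [(hvper q.1 q.2.1 q.2.2.1 q.2.2.2).1]
  have hVper2Y : ∀ q : ℝ × Pt, V2 (q + ((0:ℝ),((0:ℝ),(2:ℝ),(0:ℝ)))) = V2 q := by
    intro q
    have hq : q + ((0:ℝ),((0:ℝ),(2:ℝ),(0:ℝ))) = (q.1, (q.2.1, q.2.2.1 + 2, q.2.2.2)) := by
      simp [Prod.ext_iff]
    rw [hq]
    show (v q.1 (q.2.1, q.2.2.1 + 2, q.2.2.2)).2 = (v q.1 q.2).2
    rw [(hvper q.1 q.2.1 q.2.2.1 q.2.2.2).2]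
  have hperX1 : ∀ q : ℝ × Pt, Dd eZ V1 (q + ((0:ℝ),((2:ℝ),(0:ℝ),(0:ℝ)))) = Dd eZ V1 q :=
    fun q => Dd_shift hV1d _ hVper1X eZ q
  have hperY1 : ∀ q : ℝ × Pt, Dd eZ V1 (q + ((0:ℝ),((0:ℝ),(2:ℝ),(0:ℝ)))) = Dd eZ V1 q :=
    fun q => Dd_shift hV1d _ hVper1Y eZ q
  have hperX2 : ∀ q : ℝ × Pt, Dd eZ V2 (q + ((0:ℝ),((2:ℝ),(0:ℝ),(0:ℝ)))) = Dd eZ V2 q :=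
    fun q => Dd_shift hV2d _ hVper2X eZ q
  have hperY2 : ∀ q : ℝ × Pt, Dd eZ V2 (q + ((0:ℝ),((0:ℝ),(2:ℝ),(0:ℝ)))) = Dd eZ V2 q :=
    fun q => Dd_shift hV2d _ hVper2Y eZ q
  -- remainder terms
  set R1 : ℝ × Pt → ℝ := fun q =>
    -(Dd eZ V1 q * Dd eX V1 q + Dd eZ V2 q * Dd eY V1 q)
      + (Dd eX V1 q + Dd eY V2 q) * Dd eZ V1 q with hR1def
  set R2 : ℝ × Pt → ℝ := fun q =>
    -(Dd eZ V1 q * Dd eX V2 q + Dd eZ V2 q * Dd eY V2 q)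
      + (Dd eX V1 q + Dd eY V2 q) * Dd eZ V2 q with hR2def
  have hR1c : Continuous R1 := by
    apply Continuous.add
    · exact (((Dd_contDiff hV1 eZ).continuous.mul (Dd_contDiff hV1 eX).continuous).add
        ((Dd_contDiff hV2 eZ).continuous.mul (Dd_contDiff hV1 eY).continuous)).neg
    · exact ((Dd_contDiff hV1 eX).continuous.add (Dd_contDiff hV2 eY).continuous).mul
        (Dd_contDiff hV1 eZ).continuous
  have hR2c : Continuous R2 := by
    apply Continuous.add
    · exact (((Dd_contDiff hV1 eZ).continuous.mul (Dd_contDiff hV2 eX).continuous).add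
        ((Dd_contDiff hV2 eZ).continuous.mul (Dd_contDiff hV2 eY).continuous)).neg
    · exact ((Dd_contDiff hV1 eX).continuous.add (Dd_contDiff hV2 eY).continuous).mul
        (Dd_contDiff hV2 eZ).continuous
  -- uniform bounds on a compact region
  set KK : Set (ℝ × Pt) := Icc (0:ℝ) T ×ˢ (Icc (-1:ℝ) 1 ×ˢ Icc (-1:ℝ) 1 ×ˢ Icc z0 z0)
    with hKKdef
  have hKK : IsCompact KK :=
    isCompact_Icc.prod (isCompact_Icc.prod (isCompact_Icc.prod isCompact_Icc))
  obtain ⟨Ma, hMa⟩ := hKK.exists_bound_of_continuousOn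
    (Dd_contDiff hV1 eX).continuous.continuousOn
  obtain ⟨Mb, hMb⟩ := hKK.exists_bound_of_continuousOn
    (Dd_contDiff hV1 eY).continuous.continuousOn
  obtain ⟨Mc, hMc⟩ := hKK.exists_bound_of_continuousOn
    (Dd_contDiff hV2 eX).continuous.continuousOn
  obtain ⟨Md, hMd⟩ := hKK.exists_bound_of_continuousOn
    (Dd_contDiff hV2 eY).continuous.continuousOn
  obtain ⟨Me, hMe⟩ := hKK.exists_bound_of_continuousOn hV1.continuous.continuousOn
  obtain ⟨Mf, hMf⟩ := hKK.exists_bound_of_continuousOn hV2.continuous.continuousOn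
  have hpt0 : (((0:ℝ), ((0:ℝ),(0:ℝ),z0)) : ℝ × Pt) ∈ KK :=
    ⟨⟨le_refl 0, hT.le⟩, ⟨by norm_num, by norm_num⟩, ⟨by norm_num, by norm_num⟩,
      le_refl z0, le_refl z0⟩
  have hMa0 : 0 ≤ Ma := le_trans (norm_nonneg _) (hMa _ hpt0)
  have hMb0 : 0 ≤ Mb := le_trans (norm_nonneg _) (hMb _ hpt0)
  have hMc0 : 0 ≤ Mc := le_trans (norm_nonneg _) (hMc _ hpt0)
  have hMd0 : 0 ≤ Md := le_trans (norm_nonneg _) (hMd _ hpt0)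
  have hMe0 : 0 ≤ Me := le_trans (norm_nonneg _) (hMe _ hpt0)
  have hMf0 : 0 ≤ Mf := le_trans (norm_nonneg _) (hMf _ hpt0)
  set M0 : ℝ := Ma + Mb + Mc + Md + Me + Mf with hM0def
  have hM00 : 0 ≤ M0 := by positivity
  have hbd : ∀ t ∈ Icc (0:ℝ) T, ∀ x ∈ Icc (-1:ℝ) 1, ∀ y ∈ Icc (-1:ℝ) 1,
      |V1 (t,(x,y,z0))| ≤ 3*M0 ∧ |V2 (t,(x,y,z0))| ≤ 3*M0 ∧
      |R1 (t,(x,y,z0))| ≤ 3*M0 * (|Dd eZ V1 (t,(x,y,z0))| + |Dd eZ V2 (t,(x,y,z0))|) ∧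
      |R2 (t,(x,y,z0))| ≤ 3*M0 * (|Dd eZ V1 (t,(x,y,z0))| + |Dd eZ V2 (t,(x,y,z0))|) := by
    intro t ht x hx y hy
    have hqK : ((t,(x,y,z0)) : ℝ × Pt) ∈ KK := ⟨ht, hx, hy, le_refl z0, le_refl z0⟩
    have ba := hMa _ hqK; have bb := hMb _ hqK; have bc := hMc _ hqK
    have bd := hMd _ hqK; have be := hMe _ hqK; have bf := hMf _ hqK
    rw [Real.norm_eq_abs] at ba bb bc bd be bf
    refine ⟨by rw [hV1def] at be ⊢; linarith, by rw [hV2def] at bf ⊢; linarith, ?_, ?_⟩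
    · have := Rbound (Dd eX V1 (t,(x,y,z0))) (Dd eY V1 (t,(x,y,z0))) (Dd eY V2 (t,(x,y,z0)))
        (Dd eZ V1 (t,(x,y,z0))) (Dd eZ V2 (t,(x,y,z0))) M0 hM00
        (by linarith) (by linarith) (by linarith)
      simpa [hR1def] using this
    · have := Rbound2 (Dd eX V2 (t,(x,y,z0))) (Dd eY V2 (t,(x,y,z0))) (Dd eX V1 (t,(x,y,z0)))
        (Dd eZ V1 (t,(x,y,z0))) (Dd eZ V2 (t,(x,y,z0))) M0 hM00
        (by linarith) (by linarith) (by linarith)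
      simpa [hR2def] using this
  -- derivation of the boundary PDE for u1 = ∂z v1
  have pde1 : ∀ t ∈ Icc (0:ℝ) T, ∀ x y : ℝ,
      Dd eT (Dd eZ V1) (t,(x,y,z0))
        = Dd eX (Dd eX (Dd eZ V1)) (t,(x,y,z0)) + Dd eY (Dd eY (Dd eZ V1)) (t,(x,y,z0))
          - V1 (t,(x,y,z0)) * Dd eX (Dd eZ V1) (t,(x,y,z0))
          - V2 (t,(x,y,z0)) * Dd eY (Dd eZ V1) (t,(x,y,z0))
          + R1 (t,(x,y,z0)) := by
    intro t ht x y
    have hΦ0 : ∀ z ∈ Icc (-h) h,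
        (Dd eT V1 (t,(x,y,z))
          + (V1 (t,(x,y,z)) * Dd eX V1 (t,(x,y,z)) + V2 (t,(x,y,z)) * Dd eY V1 (t,(x,y,z)))
          + Wf (t,(x,y,z)) * Dd eZ V1 (t,(x,y,z))
          - (Dd eX (Dd eX V1) (t,(x,y,z)) + Dd eY (Dd eY V1) (t,(x,y,z)))
          + Dd eX P (t,(x,y,z))) = 0 := by
      intro z hz
      have hm := hmom1 t ht (x,y,z) hz
      simp only [cXX1, cYY1] at hm
      simp only [cT1, cX1, cY1, cZ1, cXpr] at hm
      exact hm
    have s1 := hasDerivAt_sliceZ (top_diff (Dd_contDiff hV1 eT)) t x y z0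
    have s2 := hasDerivAt_sliceZ hV1d t x y z0
    have s3 := hasDerivAt_sliceZ (top_diff (Dd_contDiff hV1 eX)) t x y z0
    have s4 := hasDerivAt_sliceZ hV2d t x y z0
    have s5 := hasDerivAt_sliceZ (top_diff (Dd_contDiff hV1 eY)) t x y z0
    have s6 := hasDerivAt_sliceZ hWd t x y z0
    have s7 := hasDerivAt_sliceZ (top_diff (Dd_contDiff hV1 eZ)) t x y z0
    have s8 := hasDerivAt_sliceZ (top_diff (Dd_contDiff (Dd_contDiff hV1 eX) eX)) t x y z0
    have s9 := hasDerivAt_sliceZ (top_diff (Dd_contDiff (Dd_contDiff hV1 eY) eY)) t x y z0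
    have s10 := hasDerivAt_sliceZ (top_diff (Dd_contDiff hP eX)) t x y z0
    have hΦd := (((s1.add ((s2.mul s3).add (s4.mul s5))).add (s6.mul s7)).sub (s8.add s9)).add s10
    have hD0 := deriv_zero_of_eqOn_Icc (by linarith : -h < h) hIcc hΦd hΦ0
    -- commute derivatives
    have fXZ : Dd eZ (Dd eX V1) = Dd eX (Dd eZ V1) := funext fun q => Dd_comm hV1 eZ eX q
    have fYZ : Dd eZ (Dd eY V1) = Dd eY (Dd eZ V1) := funext fun q => Dd_comm hV1 eZ eY q
    have c1 : Dd eZ (Dd eT V1) (t,(x,y,z0)) = Dd eT (Dd eZ V1) (t,(x,y,z0)) :=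
      Dd_comm hV1 eZ eT _
    have c2 : Dd eZ (Dd eX (Dd eX V1)) (t,(x,y,z0)) = Dd eX (Dd eX (Dd eZ V1)) (t,(x,y,z0)) := by
      rw [Dd_comm (Dd_contDiff hV1 eX) eZ eX _, fXZ]
    have c3 : Dd eZ (Dd eY (Dd eY V1)) (t,(x,y,z0)) = Dd eY (Dd eY (Dd eZ V1)) (t,(x,y,z0)) := by
      rw [Dd_comm (Dd_contDiff hV1 eY) eZ eY _, fYZ]
    have c4 : Dd eZ (Dd eX P) (t,(x,y,z0)) = 0 := by
      have hc := Dd_comm hP eZ eX (t,(x,y,z0))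
      have hzero : ∀ s : ℝ, Dd eZ P (t,(s,y,z0)) = 0 := by
        intro s
        have hh := hhydro t ht (s,y,z0) hIcc
        simp only [cZpr] at hh
        exact hh
      have hdx := hasDerivAt_sliceX (top_diff (Dd_contDiff hP eZ)) t x y z0
      rw [show (fun s => Dd eZ P (t,(s,y,z0))) = fun _ => (0:ℝ) from funext hzero] at hdx
      have h0 := hdx.unique (hasDerivAt_const x 0)
      rw [hc, h0]
    have c5 : Wf (t,(x,y,z0)) = 0 := by
      rcases hz0 with h1 | h1 <;> rw [h1]
      · exact (hwb t ht x y).2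
      · exact (hwb t ht x y).1
    have c6 : Dd eZ Wf (t,(x,y,z0)) = -(Dd eX V1 (t,(x,y,z0)) + Dd eY V2 (t,(x,y,z0))) := by
      have hdv := hdiv t ht (x,y,z0) hIcc
      simp only [cX1, cY2, cZw] at hdv
      linarith
    rw [c1, c2, c3, c4, c5, c6] at hD0
    rw [show Dd eZ (Dd eX V1) (t,(x,y,z0)) = Dd eX (Dd eZ V1) (t,(x,y,z0)) from by rw [fXZ],
        show Dd eZ (Dd eY V1) (t,(x,y,z0)) = Dd eY (Dd eZ V1) (t,(x,y,z0)) from by rw [fYZ]]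
      at hD0
    simp only [hR1def]
    nlinarith [hD0]
  have pde2 : ∀ t ∈ Icc (0:ℝ) T, ∀ x y : ℝ,
      Dd eT (Dd eZ V2) (t,(x,y,z0))
        = Dd eX (Dd eX (Dd eZ V2)) (t,(x,y,z0)) + Dd eY (Dd eY (Dd eZ V2)) (t,(x,y,z0))
          - V1 (t,(x,y,z0)) * Dd eX (Dd eZ V2) (t,(x,y,z0))
          - V2 (t,(x,y,z0)) * Dd eY (Dd eZ V2) (t,(x,y,z0))
          + R2 (t,(x,y,z0)) := by
    intro t ht x y
    have hΦ0 : ∀ z ∈ Icc (-h) h,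
        (Dd eT V2 (t,(x,y,z))
          + (V1 (t,(x,y,z)) * Dd eX V2 (t,(x,y,z)) + V2 (t,(x,y,z)) * Dd eY V2 (t,(x,y,z)))
          + Wf (t,(x,y,z)) * Dd eZ V2 (t,(x,y,z))
          - (Dd eX (Dd eX V2) (t,(x,y,z)) + Dd eY (Dd eY V2) (t,(x,y,z)))
          + Dd eY P (t,(x,y,z))) = 0 := by
      intro z hz
      have hm := hmom2 t ht (x,y,z) hz
      simp only [cXX2, cYY2] at hm
      simp only [cT2, cX2, cY2, cZ2, cYpr] at hm
      exact hm
    have s1 := hasDerivAt_sliceZ (top_diff (Dd_contDiff hV2 eT)) t x y z0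
    have s2 := hasDerivAt_sliceZ hV1d t x y z0
    have s3 := hasDerivAt_sliceZ (top_diff (Dd_contDiff hV2 eX)) t x y z0
    have s4 := hasDerivAt_sliceZ hV2d t x y z0
    have s5 := hasDerivAt_sliceZ (top_diff (Dd_contDiff hV2 eY)) t x y z0
    have s6 := hasDerivAt_sliceZ hWd t x y z0
    have s7 := hasDerivAt_sliceZ (top_diff (Dd_contDiff hV2 eZ)) t x y z0
    have s8 := hasDerivAt_sliceZ (top_diff (Dd_contDiff (Dd_contDiff hV2 eX) eX)) t x y z0
    have s9 := hasDerivAt_sliceZ (top_diff (Dd_contDiff (Dd_contDiff hV2 eY) eY)) t x y z0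
    have s10 := hasDerivAt_sliceZ (top_diff (Dd_contDiff hP eY)) t x y z0
    have hΦd := (((s1.add ((s2.mul s3).add (s4.mul s5))).add (s6.mul s7)).sub (s8.add s9)).add s10
    have hD0 := deriv_zero_of_eqOn_Icc (by linarith : -h < h) hIcc hΦd hΦ0
    have fXZ : Dd eZ (Dd eX V2) = Dd eX (Dd eZ V2) := funext fun q => Dd_comm hV2 eZ eX q
    have fYZ : Dd eZ (Dd eY V2) = Dd eY (Dd eZ V2) := funext fun q => Dd_comm hV2 eZ eY q
    have c1 : Dd eZ (Dd eT V2) (t,(x,y,z0)) = Dd eT (Dd eZ V2) (t,(x,y,z0)) :=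
      Dd_comm hV2 eZ eT _
    have c2 : Dd eZ (Dd eX (Dd eX V2)) (t,(x,y,z0)) = Dd eX (Dd eX (Dd eZ V2)) (t,(x,y,z0)) := by
      rw [Dd_comm (Dd_contDiff hV2 eX) eZ eX _, fXZ]
    have c3 : Dd eZ (Dd eY (Dd eY V2)) (t,(x,y,z0)) = Dd eY (Dd eY (Dd eZ V2)) (t,(x,y,z0)) := by
      rw [Dd_comm (Dd_contDiff hV2 eY) eZ eY _, fYZ]
    have c4 : Dd eZ (Dd eY P) (t,(x,y,z0)) = 0 := by
      have hc := Dd_comm hP eZ eY (t,(x,y,z0))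
      have hzero : ∀ s : ℝ, Dd eZ P (t,(x,s,z0)) = 0 := by
        intro s
        have hh := hhydro t ht (x,s,z0) hIcc
        simp only [cZpr] at hh
        exact hh
      have hdy := hasDerivAt_sliceY (top_diff (Dd_contDiff hP eZ)) t x y z0
      rw [show (fun s => Dd eZ P (t,(x,s,z0))) = fun _ => (0:ℝ) from funext hzero] at hdy
      have h0 := hdy.unique (hasDerivAt_const y 0)
      rw [hc, h0]
    have c5 : Wf (t,(x,y,z0)) = 0 := by
      rcases hz0 with h1 | h1 <;> rw [h1]
      · exact (hwb t ht x y).2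
      · exact (hwb t ht x y).1
    have c6 : Dd eZ Wf (t,(x,y,z0)) = -(Dd eX V1 (t,(x,y,z0)) + Dd eY V2 (t,(x,y,z0))) := by
      have hdv := hdiv t ht (x,y,z0) hIcc
      simp only [cX1, cY2, cZw] at hdv
      linarith
    rw [c1, c2, c3, c4, c5, c6] at hD0
    rw [show Dd eZ (Dd eX V2) (t,(x,y,z0)) = Dd eX (Dd eZ V2) (t,(x,y,z0)) from by rw [fXZ],
        show Dd eZ (Dd eY V2) (t,(x,y,z0)) = Dd eY (Dd eZ V2) (t,(x,y,z0)) from by rw [fYZ]]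
      at hD0
    simp only [hR2def]
    nlinarith [hD0]
  -- initial condition
  have hinit' : ∀ x y : ℝ, Dd eZ V1 ((0:ℝ),(x,y,z0)) = 0 ∧ Dd eZ V2 ((0:ℝ),(x,y,z0)) = 0 := by
    intro x y
    constructor
    · rw [← cZ1]; exact (hinit x y).1
    · rw [← cZ2]; exact (hinit x y).2
  -- apply the energy argument
  have main := energy_lemma T z0 hT (Dd eZ V1) (Dd eZ V2) V1 V2 R1 R2
    (Dd_contDiff hV1 eZ) (Dd_contDiff hV2 eZ) hV1.continuous hV2.continuous hR1c hR2c
    hperX1 hperY1 hperX2 hperY2 (3*M0) (by linarith) hbd pde1 pde2 hinit'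
  intro t ht x y
  constructor
  · rw [cZ1]; exact (main t ht x y).1
  · rw [cZ2]; exact (main t ht x y).2
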